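/- Sensitivity of the DFA weight update for a fully connected layer: fix a matrix B with spectral norm ‖B‖₂ ≤ β and constants γ, τ_e, τ_h ≥ 0. Suppose to each record d are associated vectors e(d), w(d), h(d) with ‖e(d)‖₂ ≤ τ_e, |w(d)[i]| ≤ γ for every coordinate i, and ‖h(d)‖₂ ≤ τ_h. For a minibatch (d_1, …, d_m), let ζ = (1/m) Σ_{i=1}^m ((B e(d_i)) ⊙ w(d_i)) h(d_i)ᵀ. Then for any two minibatches of size m differing in exactly one record, the Frobenius norm of the difference of the corresponding values of ζ is at most 2 γ τ_h β τ_e / m. -/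

import Mathlib

/-- The Frobenius norm of a real matrix: `(Σ_{i,j} M_{i,j}²)^{1/2}`. -/
noncomputable def frobeniusNorm {p q : ℕ} (M : Matrix (Fin p) (Fin q) ℝ) : ℝ :=
  Real.sqrt (∑ i, ∑ j, (M i j) ^ 2)

/-- The outer product `u vᵀ`. -/
def outer {p q : ℕ} (u : EuclideanSpace ℝ (Fin p)) (v : EuclideanSpace ℝ (Fin q)) :
    Matrix (Fin p) (Fin q) ℝ :=
  Matrix.of fun i j => u i * v j

/-- The Hadamard (elementwise) product of two vectors. -/
noncomputable def hadamard {n : ℕ} (u w : EuclideanSpace ℝ (Fin n)) :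
    EuclideanSpace ℝ (Fin n) :=
  WithLp.toLp 2 (fun i => u i * w i)

/-- Matrix-vector multiplication, valued in Euclidean space. -/
noncomputable def mulVecE {p q : ℕ} (B : Matrix (Fin p) (Fin q) ℝ)
    (v : EuclideanSpace ℝ (Fin q)) : EuclideanSpace ℝ (Fin p) :=
  WithLp.toLp 2 (fun i => ∑ j, B i j * v j)

/-- The spectral norm of a real matrix: the operator norm induced by Euclidean
vector norms (the largest singular value). -/
noncomputable def matSpectralNorm {p q : ℕ} (B : Matrix (Fin p) (Fin q) ℝ) : ℝ :=
  ‖LinearMap.toContinuousLinearMap (Matrix.toEuclideanLin B)‖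

lemma euclid_norm {ι : Type*} [Fintype ι] (u : EuclideanSpace ℝ ι) :
    ‖u‖ = Real.sqrt (∑ i, u i ^ 2) := by
  rw [EuclideanSpace.norm_eq]
  congr 1
  refine Finset.sum_congr rfl fun i _ => ?_
  rw [Real.norm_eq_abs, sq_abs]

noncomputable def flat {p q : ℕ} (M : Matrix (Fin p) (Fin q) ℝ) :
    EuclideanSpace ℝ (Fin p × Fin q) :=
  WithLp.toLp 2 (fun x : Fin p × Fin q => M x.1 x.2)

lemma frob_eq {p q : ℕ} (M : Matrix (Fin p) (Fin q) ℝ) :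
    frobeniusNorm M = ‖flat M‖ := by
  rw [euclid_norm, frobeniusNorm]
  congr 1
  rw [Fintype.sum_prod_type]
  rfl

lemma frob_sub_le {p q : ℕ} (A C : Matrix (Fin p) (Fin q) ℝ) :
    frobeniusNorm (A - C) ≤ frobeniusNorm A + frobeniusNorm C := by
  rw [frob_eq, frob_eq, frob_eq]
  have : flat (A - C) = flat A - flat C := rfl
  rw [this]
  exact norm_sub_le _ _

lemma frob_smul {p q : ℕ} (c : ℝ) (M : Matrix (Fin p) (Fin q) ℝ) :
    frobeniusNorm (c • M) = |c| * frobeniusNorm M := by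
  rw [frob_eq, frob_eq]
  have : flat (c • M) = c • flat M := rfl
  rw [this, norm_smul, Real.norm_eq_abs]

lemma frob_outer {p q : ℕ} (u : EuclideanSpace ℝ (Fin p)) (v : EuclideanSpace ℝ (Fin q)) :
    frobeniusNorm (outer u v) = ‖u‖ * ‖v‖ := by
  rw [frobeniusNorm, euclid_norm, euclid_norm,
    ← Real.sqrt_mul (by positivity)]
  congr 1
  rw [Finset.sum_mul]
  refine Finset.sum_congr rfl fun i _ => ?_
  rw [Finset.mul_sum]
  refine Finset.sum_congr rfl fun jj _ => ?_
  simp [outer]; ring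

lemma mulVecE_norm_le {p q : ℕ} (B : Matrix (Fin p) (Fin q) ℝ) (v : EuclideanSpace ℝ (Fin q)) :
    ‖mulVecE B v‖ ≤ matSpectralNorm B * ‖v‖ := by
  have : mulVecE B v = (LinearMap.toContinuousLinearMap (Matrix.toEuclideanLin B)) v := by
    ext i
    rfl
  rw [this]
  exact (LinearMap.toContinuousLinearMap (Matrix.toEuclideanLin B)).le_opNorm v

lemma hadamard_norm_le {n : ℕ} (u ww : EuclideanSpace ℝ (Fin n)) (γ : ℝ) (hγ : 0 ≤ γ)
    (hw : ∀ i, |ww i| ≤ γ) : ‖hadamard u ww‖ ≤ γ * ‖u‖ := by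
  rw [euclid_norm, euclid_norm, ← Real.sqrt_sq hγ, ← Real.sqrt_mul (by positivity)]
  apply Real.sqrt_le_sqrt
  rw [Finset.mul_sum]
  refine Finset.sum_le_sum fun i _ => ?_
  have h1 : (hadamard u ww) i ^ 2 = ww i ^ 2 * u i ^ 2 := by simp [hadamard]; ring
  rw [h1]
  have : ww i ^ 2 ≤ γ ^ 2 := by
    rw [← sq_abs]
    exact pow_le_pow_left₀ (abs_nonneg _) (hw i) 2
  nlinarith [sq_nonneg (u i)]

/-- Sensitivity of the DFA weight update `ζ = (1/m) Σᵢ ((B e(dᵢ)) ⊙ w(dᵢ)) h(dᵢ)ᵀ`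
for a fully connected layer: if `‖B‖₂ ≤ β`, `‖e(d)‖₂ ≤ τ_e`, `|w(d)[i]| ≤ γ`
coordinatewise (with `γ ≥ 0`), and `‖h(d)‖₂ ≤ τ_h` for every record `d`, then for
two minibatches of size `m` that agree in all but one position, the Frobenius norm
of the difference of the corresponding values of `ζ` is at most `2 γ τ_h β τ_e / m`. -/
theorem dfa_weight_update_sensitivity {D : Type*} {nl K np : ℕ} {m : ℕ} (hm : 0 < m)
    (B : Matrix (Fin nl) (Fin K) ℝ) (β γ τe τh : ℝ) (hγ : 0 ≤ γ)
    (hB : matSpectralNorm B ≤ β)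
    (e : D → EuclideanSpace ℝ (Fin K)) (he : ∀ d, ‖e d‖ ≤ τe)
    (w : D → EuclideanSpace ℝ (Fin nl)) (hw : ∀ d i, |w d i| ≤ γ)
    (h : D → EuclideanSpace ℝ (Fin np)) (hh : ∀ d, ‖h d‖ ≤ τh)
    (d d' : Fin m → D) (j : Fin m) (hagree : ∀ i, i ≠ j → d i = d' i) :
    frobeniusNorm
      ((1 / (m : ℝ)) • ∑ i, outer (hadamard (mulVecE B (e (d i))) (w (d i))) (h (d i)) -
       (1 / (m : ℝ)) • ∑ i, outer (hadamard (mulVecE B (e (d' i))) (w (d' i))) (h (d' i)))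
      ≤ 2 * γ * τh * β * τe / m := by
  set f : D → Matrix (Fin nl) (Fin np) ℝ :=
    fun x => outer (hadamard (mulVecE B (e x)) (w x)) (h x) with hf
  have hβ : 0 ≤ β := le_trans (norm_nonneg _) hB
  have hτe : 0 ≤ τe := le_trans (norm_nonneg _) (he (d j))
  have hτh : 0 ≤ τh := le_trans (norm_nonneg _) (hh (d j))
  have hm' : (0:ℝ) < m := by exact_mod_cast hm
  have key : (1 / (m : ℝ)) • ∑ i, f (d i) - (1 / (m : ℝ)) • ∑ i, f (d' i)
      = (1 / (m : ℝ)) • (f (d j) - f (d' j)) := by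
    rw [← smul_sub, ← Finset.sum_sub_distrib]
    congr 1
    rw [Finset.sum_eq_single j]
    · intro i _ hi
      rw [hagree i hi, sub_self]
    · intro hj; exact absurd (Finset.mem_univ j) hj
  rw [key, frob_smul]
  have bound : ∀ x : D, frobeniusNorm (f x) ≤ γ * τh * β * τe := by
    intro x
    rw [hf, frob_outer]
    have h2 : ‖mulVecE B (e x)‖ ≤ β * τe :=
      le_trans (mulVecE_norm_le B (e x))
        (mul_le_mul hB (he x) (norm_nonneg _) hβ)
    have h1 : ‖hadamard (mulVecE B (e x)) (w x)‖ ≤ γ * (β * τe) :=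
      le_trans (hadamard_norm_le _ _ γ hγ (hw x)) (by gcongr)
    calc ‖hadamard (mulVecE B (e x)) (w x)‖ * ‖h x‖
        ≤ (γ * (β * τe)) * τh :=
          mul_le_mul h1 (hh x) (norm_nonneg _) (by positivity)
      _ = γ * τh * β * τe := by ring
  calc |1 / (m : ℝ)| * frobeniusNorm (f (d j) - f (d' j))
      ≤ (1 / m) * (frobeniusNorm (f (d j)) + frobeniusNorm (f (d' j))) := by
        rw [abs_of_pos (by positivity)]
        exact mul_le_mul_of_nonneg_left (frob_sub_le _ _) (by positivity)
    _ ≤ (1 / m) * (γ * τh * β * τe + γ * τh * β * τe) := by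
        gcongr <;> exact bound _
    _ = 2 * γ * τh * β * τe / m := by ring
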